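/- arXiv:2305.05877 — 2 statements merged into one kernel-verified Lean document; each statement's English description precedes it below -/
import Mathlib

section
/- For every n ≥ 0, Pₙ = Σ_{m=0}^{⌊n/2⌋} (q^{−m(2m+1−2δ_{n≡t})} / ((1−q⁻⁴)(1−q⁻⁸)⋯(1−q^{−4m})))·Δ_{n−2m} in Uⁱ. -/
/-!
Setting: `K = ℚ(q)` is the field of rational functions over `ℚ`; `U⁻ = ℚ(q)[F]` and
`Uⁱ = ℚ(q)[B]` are both realized as `Polynomial K`, with `F` resp. `B` the variable
`Polynomial.X`.
-/

noncomputable section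

abbrev K : Type := RatFunc ℚ

/-- The variable `q` of `ℚ(q)`. -/
def q : K := RatFunc.X

/-- The quantum integer `[n] = (qⁿ - q⁻ⁿ)/(q - q⁻¹)`. -/
def qint (n : ℕ) : K := (q ^ n - q⁻¹ ^ n) / (q - q⁻¹)

/-- The quantum factorial `[n]! = [1][2]⋯[n]`, `[0]! = 1`. -/
def qfact : ℕ → K
  | 0 => 1
  | n + 1 => qfact n * qint (n + 1)

/-- The PBW basis elements `Δₙ ∈ Uⁱ`: `Δ₀ = 1` and
`[n+1]·Δ_{n+1} = B·Δₙ − (q^{n-1}/(1−q⁻²))·Δ_{n−1}` for `n ≥ 0`, interpreting `Δ₋₁ = 0`. -/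
def Δel : ℕ → Polynomial K
  | 0 => 1
  | 1 => (qint 1)⁻¹ • (Polynomial.X : Polynomial K)
  | n + 2 => (qint (n + 2))⁻¹ •
      (Polynomial.X * Δel (n + 1) - (q ^ n / (1 - q⁻¹ ^ 2)) • Δel n)

/-- The ı-canonical basis elements `Pₙ ∈ Uⁱ` (for the parameter `t ∈ {0,1}`): `P₀ = 1` and
`[n+1]·P_{n+1} = B·Pₙ − δ_{n≡t}·[n]·P_{n−1}` for `n ≥ 0`, interpreting `P₋₁ = 0`
(for `n = 0` the last term vanishes as `[0] = 0`). -/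
def Pel (t : ℕ) : ℕ → Polynomial K
  | 0 => 1
  | 1 => (qint 1)⁻¹ • (Polynomial.X : Polynomial K)
  | n + 2 => (qint (n + 2))⁻¹ •
      (Polynomial.X * Pel t (n + 1) -
        (if (n + 1) % 2 = t % 2 then qint (n + 1) else 0) • Pel t n)

lemma q_ne_zero : q ≠ 0 := RatFunc.X_ne_zero
lemma q_pow_ne_one {k : ℕ} (hk : k ≠ 0) : q ^ k ≠ 1 := by
  have h0 : (q : K) ^ k = algebraMap (Polynomial ℚ) K (Polynomial.X ^ k) := by
    rw [map_pow]; rfl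
  rw [h0]
  intro h
  have h1 : algebraMap (Polynomial ℚ) K (Polynomial.X ^ k) = algebraMap (Polynomial ℚ) K 1 := by
    simpa using h
  have h2 := RatFunc.algebraMap_injective ℚ |>.eq_iff.mp h1
  have hd := congrArg Polynomial.natDegree h2
  simp [Polynomial.natDegree_X_pow] at hd
  exact hk hd
lemma one_sub_qinv_pow_ne_zero {j : ℕ} (hj : j ≠ 0) : (1 : K) - q⁻¹ ^ j ≠ 0 := by
  intro h
  have h1 : q⁻¹ ^ j = 1 := by linear_combination -h
  have h2 : (q ^ j)⁻¹ = 1 := by rw [← inv_pow]; exact h1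
  exact q_pow_ne_one hj (by rw [← inv_inv (q ^ j), h2]; norm_num)
lemma q_sub_qinv_ne_zero : q - q⁻¹ ≠ 0 := by
  intro h
  have hq := q_ne_zero
  have h2 : q ^ 2 = 1 := by field_simp at h; linear_combination h
  exact q_pow_ne_one (by norm_num) h2

lemma qint_ne_zero {n : ℕ} (hn : n ≠ 0) : qint n ≠ 0 := by
  have hq := q_ne_zero
  have hnum : q ^ n - q⁻¹ ^ n ≠ 0 := by
    intro h
    have h1 : q ^ n * (q ^ n - q⁻¹ ^ n) = q ^ (2 * n) - 1 := by
      rw [two_mul, pow_add]; field_simp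
      rw [one_div, inv_pow, mul_sub, mul_inv_cancel₀ (pow_ne_zero _ hq)]; ring
    have h2 : q ^ (2 * n) = 1 := by rw [h, mul_zero] at h1; linear_combination -h1
    exact q_pow_ne_one (by omega) h2
  exact div_ne_zero hnum q_sub_qinv_ne_zero
lemma qint_one : qint 1 = 1 := by
  rw [qint, pow_one, pow_one, div_self q_sub_qinv_ne_zero]

def Pp (m : ℕ) : K := ∏ k ∈ Finset.range m, (1 - q⁻¹ ^ (4 * (k + 1)))
lemma Pp_ne_zero (m : ℕ) : Pp m ≠ 0 :=
  Finset.prod_ne_zero_iff.mpr fun k _ => one_sub_qinv_pow_ne_zero (by omega)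
lemma Pp_succ (m : ℕ) : Pp (m+1) = Pp m * (1 - q⁻¹ ^ (4 * (m + 1))) :=
  Finset.prod_range_succ _ _

def cc (d m : ℕ) : K := q⁻¹ ^ (m * (2 * m + 1 - 2 * d)) / Pp m


-- exponent identities
lemma expA (m : ℕ) : m * (2 * m + 1 - 2 * 0) = m * (2 * m + 1 - 2 * 1) + 2 * m := by
  cases m with
  | zero => rfl
  | succ k =>
      have h0 : 2 * (k+1) + 1 - 2 * 0 = 2 * k + 3 := by omega
      have h : 2 * (k+1) + 1 - 2 * 1 = 2 * k + 1 := by omega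
      rw [h0, h]; ring
lemma expB (m : ℕ) : (m+1) * (2 * (m+1) + 1 - 2 * 1) = m * (2 * m + 1 - 2 * 1) + (4 * m + 1) := by
  cases m with
  | zero => rfl
  | succ k =>
      have h1 : 2 * (k+1+1) + 1 - 2 * 1 = 2 * k + 3 := by omega
      have h2 : 2 * (k+1) + 1 - 2 * 1 = 2 * k + 1 := by omega
      rw [h1, h2]; ring
lemma expC (m : ℕ) : (m+1) * (2 * (m+1) + 1 - 2 * 0) = m * (2 * m + 1 - 2 * 1) + (6 * m + 3) := by
  cases m with
  | zero => rfl
  | succ k =>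
      have h0 : 2 * (k+1+1) + 1 - 2 * 0 = 2 * k + 5 := by omega
      have h2 : 2 * (k+1) + 1 - 2 * 1 = 2 * k + 1 := by omega
      rw [h0, h2]; ring

lemma qpow_eq (x : K) (b c e : ℕ) (h : e = b + c) : x ^ e = x ^ b * x ^ c := by
  rw [h, pow_add]

lemma qipow_y (c d e : ℕ) (h : e = c * d) : (q⁻¹ : K) ^ e = ((q ^ c)⁻¹) ^ d := by
  rw [h, pow_mul, inv_pow]



lemma q_sq_sub_one_ne_zero : (q : K) ^ 2 - 1 ≠ 0 := by
  intro h; exact q_pow_ne_one (k := 2) (by norm_num) (by linear_combination h)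

lemma pow4_sub_one_ne_zero (m : ℕ) : ((q : K) ^ m) ^ 4 * q ^ 4 - 1 ≠ 0 := by
  intro h
  refine q_pow_ne_one (k := 4 * m + 4) (by omega) ?_
  calc q ^ (4 * m + 4) = (q ^ m) ^ 4 * q ^ 4 := by
        rw [show 4 * m + 4 = m * 4 + 4 by ring, pow_add, pow_mul]
    _ = 1 := by linear_combination h

set_option maxHeartbeats 1600000 in
lemma key1 (n m : ℕ) (h : 2 * m ≤ n) :
    qint (n+2) * cc 1 (m+1)
      = qint (n - 2*m) * cc 0 (m+1) + q ^ (n - 2*m) / (1 - q⁻¹ ^ 2) * cc 0 m := by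
  have hq := q_ne_zero
  have hy : (q : K) ^ m ≠ 0 := pow_ne_zero _ hq
  have hr : (q : K) ^ (n - 2*m) ≠ 0 := pow_ne_zero _ hq
  have hP := Pp_ne_zero m
  have hs := q_sq_sub_one_ne_zero
  have h4 := pow4_sub_one_ne_zero m
  have h1 := q_sub_qinv_ne_zero
  have h2 : (1 : K) - q⁻¹ ^ 2 ≠ 0 := one_sub_qinv_pow_ne_zero (by norm_num)
  have hw : (q⁻¹ : K) ^ (4 * (m+1)) = ((q ^ m)⁻¹) ^ 4 * q⁻¹ ^ 4 := by
    rw [qpow_eq q⁻¹ (m*4) 4 _ (by omega), qipow_y m 4 (m*4) (by omega)]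
  have h3' : (1 : K) - ((q ^ m)⁻¹) ^ 4 * q⁻¹ ^ 4 ≠ 0 := by
    rw [← hw]; exact one_sub_qinv_pow_ne_zero (by omega)
  have hq2 : qint (n+2)
      = ((q ^ (n-2*m)) ^ 2 * (q ^ m) ^ 4 * q ^ 4 - 1) * q
          / (q ^ (n-2*m) * ((q ^ m) ^ 2 * q ^ 2) * (q ^ 2 - 1)) := by
    rw [qint, qpow_eq q (n-2*m) (2*m+2) (n+2) (by omega), qpow_eq q (m*2) 2 (2*m+2) (by omega),
        qpow_eq q⁻¹ (n-2*m) (2*m+2) (n+2) (by omega), qpow_eq q⁻¹ (m*2) 2 (2*m+2) (by omega),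
        inv_pow q (n-2*m), qipow_y m 2 (m*2) (by omega), pow_mul,
        div_eq_div_iff h1 (mul_ne_zero (mul_ne_zero hr (mul_ne_zero (pow_ne_zero _ hy) (pow_ne_zero _ hq))) hs)]
    field_simp
  have hq0 : qint (n - 2*m)
      = ((q ^ (n-2*m)) ^ 2 - 1) * q / (q ^ (n-2*m) * (q ^ 2 - 1)) := by
    rw [qint, inv_pow, div_eq_div_iff h1 (mul_ne_zero hr hs)]
    field_simp
  have hcc1 : cc 1 (m+1)
      = q⁻¹ ^ (m * (2*m+1-2*1)) * q ^ 3 / (Pp m * ((q ^ m) ^ 4 * q ^ 4 - 1)) := by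
    rw [cc, Pp_succ, hw, qpow_eq q⁻¹ (m * (2*m+1-2*1)) (4*m+1) _ (expB m),
        qpow_eq q⁻¹ (m*4) 1 (4*m+1) (by omega), qipow_y m 4 (m*4) (by omega), pow_one,
        div_eq_div_iff (mul_ne_zero hP h3') (mul_ne_zero hP h4)]
    field_simp
  have hcc0s : cc 0 (m+1)
      = q⁻¹ ^ (m * (2*m+1-2*1)) * q / ((q ^ m) ^ 2 * (Pp m * ((q ^ m) ^ 4 * q ^ 4 - 1))) := by
    rw [cc, Pp_succ, hw, qpow_eq q⁻¹ (m * (2*m+1-2*1)) (6*m+3) _ (expC m),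
        qpow_eq q⁻¹ (m*6) 3 (6*m+3) (by omega), qipow_y m 6 (m*6) (by omega),
        div_eq_div_iff (mul_ne_zero hP h3') (mul_ne_zero (pow_ne_zero _ hy) (mul_ne_zero hP h4))]
    field_simp
  have hcc0 : cc 0 m = q⁻¹ ^ (m * (2*m+1-2*1)) / ((q ^ m) ^ 2 * Pp m) := by
    rw [cc, qpow_eq q⁻¹ (m * (2*m+1-2*1)) (2*m) _ (expA m), qipow_y m 2 (2*m) (by omega),
        div_eq_div_iff hP (mul_ne_zero (pow_ne_zero _ hy) hP)]
    field_simp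
  have he : q ^ (n - 2*m) / (1 - q⁻¹ ^ 2) = q ^ (n-2*m) * q ^ 2 / (q ^ 2 - 1) := by
    rw [div_eq_div_iff h2 hs]
    field_simp
  rw [hq2, hq0, hcc1, hcc0s, hcc0, he]
  generalize q ^ (n - 2*m) = r at hr ⊢
  generalize q ^ m = y at hy h4 ⊢
  generalize q⁻¹ ^ (m * (2*m+1-2*1)) = a
  generalize Pp m = P at hP ⊢
  have d1 : (r * (y ^ 2 * q ^ 2) * (q ^ 2 - 1) : K) ≠ 0 :=
    mul_ne_zero (mul_ne_zero hr (mul_ne_zero (pow_ne_zero _ hy) (pow_ne_zero _ hq))) hs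
  have d2 : (P * (y ^ 4 * q ^ 4 - 1) : K) ≠ 0 := mul_ne_zero hP h4
  have d3 : (r * (q ^ 2 - 1) : K) ≠ 0 := mul_ne_zero hr hs
  have d4 : (y ^ 2 * (P * (y ^ 4 * q ^ 4 - 1)) : K) ≠ 0 := mul_ne_zero (pow_ne_zero _ hy) d2
  have d5 : (y ^ 2 * P : K) ≠ 0 := mul_ne_zero (pow_ne_zero _ hy) hP
  rw [div_mul_div_comm, div_mul_div_comm, div_mul_div_comm,
      div_add_div _ _ (mul_ne_zero d3 d4) (mul_ne_zero hs d5),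
      div_eq_div_iff (mul_ne_zero d1 d2) (mul_ne_zero (mul_ne_zero d3 d4) (mul_ne_zero hs d5))]
  ring

set_option maxHeartbeats 1600000 in
lemma key0 (n m : ℕ) (h : 2 * m ≤ n) :
    qint (n+2) * cc 0 (m+1) + qint (n+1) * cc 0 m
      = qint (n - 2*m) * cc 1 (m+1) + q ^ (n - 2*m) / (1 - q⁻¹ ^ 2) * cc 1 m := by
  have hq := q_ne_zero
  have hy : (q : K) ^ m ≠ 0 := pow_ne_zero _ hq
  have hr : (q : K) ^ (n - 2*m) ≠ 0 := pow_ne_zero _ hq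
  have hP := Pp_ne_zero m
  have hs := q_sq_sub_one_ne_zero
  have h4 := pow4_sub_one_ne_zero m
  have h1 := q_sub_qinv_ne_zero
  have h2 : (1 : K) - q⁻¹ ^ 2 ≠ 0 := one_sub_qinv_pow_ne_zero (by norm_num)
  have hw : (q⁻¹ : K) ^ (4 * (m+1)) = ((q ^ m)⁻¹) ^ 4 * q⁻¹ ^ 4 := by
    rw [qpow_eq q⁻¹ (m*4) 4 _ (by omega), qipow_y m 4 (m*4) (by omega)]
  have h3' : (1 : K) - ((q ^ m)⁻¹) ^ 4 * q⁻¹ ^ 4 ≠ 0 := by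
    rw [← hw]; exact one_sub_qinv_pow_ne_zero (by omega)
  have hq2 : qint (n+2)
      = ((q ^ (n-2*m)) ^ 2 * (q ^ m) ^ 4 * q ^ 4 - 1) * q
          / (q ^ (n-2*m) * ((q ^ m) ^ 2 * q ^ 2) * (q ^ 2 - 1)) := by
    rw [qint, qpow_eq q (n-2*m) (2*m+2) (n+2) (by omega), qpow_eq q (m*2) 2 (2*m+2) (by omega),
        qpow_eq q⁻¹ (n-2*m) (2*m+2) (n+2) (by omega), qpow_eq q⁻¹ (m*2) 2 (2*m+2) (by omega),
        inv_pow q (n-2*m), qipow_y m 2 (m*2) (by omega), pow_mul,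
        div_eq_div_iff h1 (mul_ne_zero (mul_ne_zero hr (mul_ne_zero (pow_ne_zero _ hy) (pow_ne_zero _ hq))) hs)]
    field_simp
  have hq1 : qint (n+1)
      = ((q ^ (n-2*m)) ^ 2 * (q ^ m) ^ 4 * q ^ 2 - 1) * q
          / (q ^ (n-2*m) * ((q ^ m) ^ 2 * q) * (q ^ 2 - 1)) := by
    rw [qint, qpow_eq q (n-2*m) (2*m+1) (n+1) (by omega), qpow_eq q (m*2) 1 (2*m+1) (by omega),
        qpow_eq q⁻¹ (n-2*m) (2*m+1) (n+1) (by omega), qpow_eq q⁻¹ (m*2) 1 (2*m+1) (by omega),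
        inv_pow q (n-2*m), qipow_y m 2 (m*2) (by omega), pow_mul, pow_one, pow_one,
        div_eq_div_iff h1 (mul_ne_zero (mul_ne_zero hr (mul_ne_zero (pow_ne_zero _ hy) hq)) hs)]
    field_simp
  have hq0 : qint (n - 2*m)
      = ((q ^ (n-2*m)) ^ 2 - 1) * q / (q ^ (n-2*m) * (q ^ 2 - 1)) := by
    rw [qint, inv_pow, div_eq_div_iff h1 (mul_ne_zero hr hs)]
    field_simp
  have hcc1 : cc 1 (m+1)
      = q⁻¹ ^ (m * (2*m+1-2*1)) * q ^ 3 / (Pp m * ((q ^ m) ^ 4 * q ^ 4 - 1)) := by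
    rw [cc, Pp_succ, hw, qpow_eq q⁻¹ (m * (2*m+1-2*1)) (4*m+1) _ (expB m),
        qpow_eq q⁻¹ (m*4) 1 (4*m+1) (by omega), qipow_y m 4 (m*4) (by omega), pow_one,
        div_eq_div_iff (mul_ne_zero hP h3') (mul_ne_zero hP h4)]
    field_simp
  have hcc0s : cc 0 (m+1)
      = q⁻¹ ^ (m * (2*m+1-2*1)) * q / ((q ^ m) ^ 2 * (Pp m * ((q ^ m) ^ 4 * q ^ 4 - 1))) := by
    rw [cc, Pp_succ, hw, qpow_eq q⁻¹ (m * (2*m+1-2*1)) (6*m+3) _ (expC m),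
        qpow_eq q⁻¹ (m*6) 3 (6*m+3) (by omega), qipow_y m 6 (m*6) (by omega),
        div_eq_div_iff (mul_ne_zero hP h3') (mul_ne_zero (pow_ne_zero _ hy) (mul_ne_zero hP h4))]
    field_simp
  have hcc0 : cc 0 m = q⁻¹ ^ (m * (2*m+1-2*1)) / ((q ^ m) ^ 2 * Pp m) := by
    rw [cc, qpow_eq q⁻¹ (m * (2*m+1-2*1)) (2*m) _ (expA m), qipow_y m 2 (2*m) (by omega),
        div_eq_div_iff hP (mul_ne_zero (pow_ne_zero _ hy) hP)]
    field_simp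
  have hcc1m : cc 1 m = q⁻¹ ^ (m * (2*m+1-2*1)) / Pp m := rfl
  have he : q ^ (n - 2*m) / (1 - q⁻¹ ^ 2) = q ^ (n-2*m) * q ^ 2 / (q ^ 2 - 1) := by
    rw [div_eq_div_iff h2 hs]
    field_simp
  rw [hq2, hq1, hq0, hcc1, hcc0s, hcc0, hcc1m, he]
  generalize q ^ (n - 2*m) = r at hr ⊢
  generalize q ^ m = y at hy h4 ⊢
  generalize q⁻¹ ^ (m * (2*m+1-2*1)) = a
  generalize Pp m = P at hP ⊢
  have d1 : (r * (y ^ 2 * q ^ 2) * (q ^ 2 - 1) : K) ≠ 0 :=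
    mul_ne_zero (mul_ne_zero hr (mul_ne_zero (pow_ne_zero _ hy) (pow_ne_zero _ hq))) hs
  have d1' : (r * (y ^ 2 * q) * (q ^ 2 - 1) : K) ≠ 0 :=
    mul_ne_zero (mul_ne_zero hr (mul_ne_zero (pow_ne_zero _ hy) hq)) hs
  have d2 : (P * (y ^ 4 * q ^ 4 - 1) : K) ≠ 0 := mul_ne_zero hP h4
  have d3 : (r * (q ^ 2 - 1) : K) ≠ 0 := mul_ne_zero hr hs
  have d4 : (y ^ 2 * (P * (y ^ 4 * q ^ 4 - 1)) : K) ≠ 0 := mul_ne_zero (pow_ne_zero _ hy) d2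
  have d5 : (y ^ 2 * P : K) ≠ 0 := mul_ne_zero (pow_ne_zero _ hy) hP
  rw [div_mul_div_comm, div_mul_div_comm, div_mul_div_comm, div_mul_div_comm,
      div_add_div _ _ (mul_ne_zero d1 d4) (mul_ne_zero d1' d5),
      div_add_div _ _ (mul_ne_zero d3 d2) (mul_ne_zero hs hP),
      div_eq_div_iff (mul_ne_zero (mul_ne_zero d1 d4) (mul_ne_zero d1' d5))
        (mul_ne_zero (mul_ne_zero d3 d2) (mul_ne_zero hs hP))]
  ring

lemma qint_zero : qint 0 = 0 := by simp [qint]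


lemma X_mul_Δel (k : ℕ) :
    (Polynomial.X : Polynomial K) * Δel k
      = qint (k+1) • Δel (k+1)
        + (if k = 0 then (0:K) else q ^ (k-1) / (1 - q⁻¹ ^ 2)) • Δel (k-1) := by
  match k with
  | 0 => simp [Δel, qint_one]
  | k+1 =>
      rw [if_neg (by omega)]
      have h : Δel (k+2) = (qint (k+2))⁻¹ •
          (Polynomial.X * Δel (k+1) - (q ^ k / (1 - q⁻¹ ^ 2)) • Δel k) := rfl
      rw [show k+1+1 = k+2 from rfl, h, smul_inv_smul₀ (qint_ne_zero (by omega))]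
      simp only [Nat.add_sub_cancel]
      rw [sub_add_cancel]

def S (d n : ℕ) : Polynomial K := ∑ m ∈ Finset.range (n / 2 + 1), cc d m • Δel (n - 2 * m)

lemma shiftΔ (N : ℕ) (f : ℕ → K) (n : ℕ) :
    ∑ m ∈ Finset.range (N+1), (if m = 0 then (0:K) else f (m-1)) • Δel (n+2-2*m)
      = ∑ m ∈ Finset.range N, f m • Δel (n - 2*m) := by
  rw [Finset.sum_range_succ'
    (f := fun m => (if m = 0 then (0:K) else f (m-1)) • Δel (n+2-2*m)) N]
  rw [if_pos rfl, zero_smul, add_zero]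
  refine Finset.sum_congr rfl fun i _ => ?_
  rw [if_neg (by omega), Nat.add_sub_cancel, show n+2-2*(i+1) = n-2*i by omega]

lemma cc_zero (d : ℕ) : cc d 0 = 1 := by simp [cc, Pp]

set_option maxHeartbeats 1600000 in
lemma Smain (n d : ℕ) (hd : d = 0 ∨ d = 1) :
    Polynomial.X * S d (n+1)
      = qint (n+2) • S (1-d) (n+2) + ((d : K) * qint (n+1)) • S (1-d) n := by
  have hL : Polynomial.X * S d (n+1)
      = (∑ m ∈ Finset.range ((n+1)/2+1), (cc d m * qint (n+2-2*m)) • Δel (n+2-2*m))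
        + ∑ m ∈ Finset.range ((n+1)/2+1),
            (cc d m * (if n+1-2*m = 0 then (0:K) else q^(n-2*m)/(1-q⁻¹^2))) • Δel (n-2*m) := by
    rw [S, Finset.mul_sum, ← Finset.sum_add_distrib]
    refine Finset.sum_congr rfl fun m hm => ?_
    have hm' : 2*m ≤ n+1 := by
      have := Finset.mem_range.mp hm; omega
    rw [mul_smul_comm, X_mul_Δel (n+1-2*m), show n+1-2*m+1 = n+2-2*m by omega,
        show n+1-2*m-1 = n-2*m by omega, smul_add, smul_smul, smul_smul]
  have hR : qint (n+2) • S (1-d) (n+2) + ((d:K) * qint (n+1)) • S (1-d) n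
      = (∑ m ∈ Finset.range ((n+2)/2+1), (qint (n+2) * cc (1-d) m) • Δel (n+2-2*m))
        + ∑ m ∈ Finset.range (n/2+1), ((d:K) * qint (n+1) * cc (1-d) m) • Δel (n-2*m) := by
    rw [S, S, Finset.smul_sum, Finset.smul_sum]
    congr 1
    · exact Finset.sum_congr rfl fun m hm => by rw [smul_smul]
    · exact Finset.sum_congr rfl fun m hm => by rw [smul_smul, mul_assoc]
  rw [hL, hR]
  obtain ⟨p, rfl | rfl⟩ := Nat.even_or_odd' n
  · -- n = 2p
    rw [show (2*p+1)/2+1 = p+1 by omega, show (2*p+2)/2+1 = p+2 by omega,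
        show (2*p)/2+1 = p+1 by omega]
    have hpad : (∑ m ∈ Finset.range (p+2), (cc d m * qint (2*p+2-2*m)) • Δel (2*p+2-2*m))
        = ∑ m ∈ Finset.range (p+1), (cc d m * qint (2*p+2-2*m)) • Δel (2*p+2-2*m) := by
      rw [Finset.sum_range_succ, show 2*p+2-2*(p+1) = 0 by omega, qint_zero, mul_zero,
          zero_smul, add_zero]
    have hif : (∑ m ∈ Finset.range (p+1),
          (cc d m * (if 2*p+1-2*m = 0 then (0:K) else q^(2*p-2*m)/(1-q⁻¹^2))) • Δel (2*p-2*m))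
        = ∑ m ∈ Finset.range (p+1), (cc d m * (q^(2*p-2*m)/(1-q⁻¹^2))) • Δel (2*p-2*m) := by
      refine Finset.sum_congr rfl fun m hm => ?_
      have := Finset.mem_range.mp hm
      rw [if_neg (by omega)]
    rw [hif, ← hpad,
        ← shiftΔ (p+1) (fun m => cc d m * (q^(2*p-2*m)/(1-q⁻¹^2))) (2*p),
        ← shiftΔ (p+1) (fun m => (d:K) * qint (2*p+1) * cc (1-d) m) (2*p),
        ← Finset.sum_add_distrib, ← Finset.sum_add_distrib]
    refine Finset.sum_congr rfl fun m hm => ?_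
    have hmr := Finset.mem_range.mp hm
    rw [← add_smul, ← add_smul]
    congr 1
    match m with
    | 0 => simp [cc_zero, mul_comm]
    | m'+1 =>
        rw [if_neg (by omega), if_neg (by omega), Nat.add_sub_cancel,
            show 2*p+2-2*(m'+1) = 2*p-2*m' by omega]
        rcases hd with rfl | rfl
        · simp only [Nat.cast_zero, zero_mul, add_zero, Nat.sub_zero]
          linear_combination -(key1 (2*p) m' (by omega))
        · simp only [Nat.cast_one, one_mul, Nat.sub_self]
          linear_combination -(key0 (2*p) m' (by omega))
  · -- n = 2p+1
    rw [show (2*p+1+1)/2+1 = p+2 by omega, show (2*p+1+2)/2+1 = p+2 by omega,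
        show (2*p+1)/2+1 = p+1 by omega]
    have hif : (∑ m ∈ Finset.range (p+2),
          (cc d m * (if 2*p+1+1-2*m = 0 then (0:K) else q^(2*p+1-2*m)/(1-q⁻¹^2))) • Δel (2*p+1-2*m))
        = ∑ m ∈ Finset.range (p+1), (cc d m * (q^(2*p+1-2*m)/(1-q⁻¹^2))) • Δel (2*p+1-2*m) := by
      rw [Finset.sum_range_succ, if_pos (by omega), mul_zero, zero_smul, add_zero]
      refine Finset.sum_congr rfl fun m hm => ?_
      have := Finset.mem_range.mp hm
      rw [if_neg (by omega)]
    rw [hif,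
        ← shiftΔ (p+1) (fun m => cc d m * (q^(2*p+1-2*m)/(1-q⁻¹^2))) (2*p+1),
        ← shiftΔ (p+1) (fun m => (d:K) * qint (2*p+1+1) * cc (1-d) m) (2*p+1),
        ← Finset.sum_add_distrib, ← Finset.sum_add_distrib]
    refine Finset.sum_congr rfl fun m hm => ?_
    have hmr := Finset.mem_range.mp hm
    rw [← add_smul, ← add_smul]
    congr 1
    match m with
    | 0 => simp [cc_zero, mul_comm]
    | m'+1 =>
        rw [if_neg (by omega), if_neg (by omega), Nat.add_sub_cancel,
            show 2*p+1+2-2*(m'+1) = 2*p+1-2*m' by omega]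
        rcases hd with rfl | rfl
        · simp only [Nat.cast_zero, zero_mul, add_zero, Nat.sub_zero]
          linear_combination -(key1 (2*p+1) m' (by omega))
        · simp only [Nat.cast_one, one_mul, Nat.sub_self]
          linear_combination -(key0 (2*p+1) m' (by omega))


set_option maxHeartbeats 3200000 in
/-- for every `n ≥ 0`,
`Pₙ = Σ_{m=0}^{⌊n/2⌋} (q^{−m(2m+1−2δ_{n≡t})}/((1−q⁻⁴)(1−q⁻⁸)⋯(1−q^{−4m})))·Δ_{n−2m}`.
(The exponent `−m(2m+1−2δ_{n≡t})` is `≤ 0`, and is written below as the corresponding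
power of `q⁻¹`; the natural-number subtraction `2m+1−2δ` only truncates when `m = 0`,
where both sides of the truncation give exponent `0`.) -/
theorem stmt11 (t : ℕ) (ht : t = 0 ∨ t = 1) (n : ℕ) :
    Pel t n =
      ∑ m ∈ Finset.range (n / 2 + 1),
        (q⁻¹ ^ (m * (2 * m + 1 - 2 * (if n % 2 = t % 2 then 1 else 0))) /
            ∏ k ∈ Finset.range m, (1 - q⁻¹ ^ (4 * (k + 1)))) • Δel (n - 2 * m) := by
  have key : ∀ N, Pel t N = S (if N % 2 = t % 2 then 1 else 0) N := by
    intro N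
    induction N using Nat.twoStepInduction with
    | zero => simp [Pel, S, cc, Pp, Δel]
    | one => simp [Pel, S, cc, Pp, Δel]
    | more k ih1 ih2 =>
        set d : ℕ := if (k+1) % 2 = t % 2 then 1 else 0 with hdd
        have hd01 : d = 0 ∨ d = 1 := by
          by_cases h : (k+1) % 2 = t % 2 <;> simp [hdd, h]
        have hP2 : Pel t (k+2) = (qint (k+2))⁻¹ •
            (Polynomial.X * Pel t (k+1) -
              (if (k+1) % 2 = t % 2 then qint (k+1) else 0) • Pel t k) := rfl
        have hifq : (if (k+1) % 2 = t % 2 then qint (k+1) else 0) = (d : K) * qint (k+1) := by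
          by_cases h : (k+1) % 2 = t % 2 <;> simp [hdd, h]
        have hswap : (if k % 2 = t % 2 then 1 else 0) = 1 - d := by
          rw [hdd]
          rcases Nat.mod_two_eq_zero_or_one k with hk | hk <;> rcases ht with rfl | rfl <;>
            · have h1 : (k+1) % 2 = 1 - k % 2 := by omega
              rw [h1, hk]
              norm_num
        have hswap2 : (if (k+2) % 2 = t % 2 then 1 else 0) = 1 - d := by
          rw [hdd]
          rcases Nat.mod_two_eq_zero_or_one k with hk | hk <;> rcases ht with rfl | rfl <;>
            · have h1 : (k+1) % 2 = 1 - k % 2 := by omega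
              have h2 : (k+2) % 2 = k % 2 := by omega
              rw [h1, h2, hk]
              norm_num
        rw [hP2, ih2, ih1, hifq, hswap, hswap2, Smain k d hd01, add_sub_cancel_right,
            inv_smul_smul₀ (qint_ne_zero (by omega))]
  rw [key n]
  simp only [S, cc, Pp]


end
end

section
/- For every odd integer r ≥ 1, the power sum p_{r,n} = x₁^r + ⋯ + xₙ^r belongs to the k-subalgebra of k[x₁,…,xₙ] generated by the elements q_{s,n} for s ≥ 1. -/
noncomputable section

/-- `q_{r,n} := Σ_{s=0}^{r} e_{s,n}·h_{r−s,n}` in `k[x₁,…,xₙ]`, where `e` and `h` are the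
elementary and complete homogeneous symmetric polynomials (`e_{s,n} = 0` for `s > n`). -/
def qsym (k : Type) [CommRing k] (n r : ℕ) : MvPolynomial (Fin n) k :=
  ∑ s ∈ Finset.range (r + 1),
    MvPolynomial.esymm (Fin n) k s * MvPolynomial.hsymm (Fin n) k (r - s)

namespace Stmt19Aux

open Finset MvPolynomial

variable {R : Type} [CommRing R]

/-- geometric series 1/(1 - y t) -/
def geo (y : R) : PowerSeries R := PowerSeries.mk fun r => y ^ r

lemma coeff_derivativeFun' (f : PowerSeries R) (n : ℕ) :
    PowerSeries.coeff n f.derivativeFun = PowerSeries.coeff (n + 1) f * (n + 1) :=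
  PowerSeries.coeff_derivative f n

lemma one_sub_mul_geo (y : R) : (1 - PowerSeries.C (R := R) y * PowerSeries.X) * geo y = 1 := by
  ext r
  rw [sub_mul, one_mul, map_sub, mul_assoc]
  cases r with
  | zero => simp [geo]
  | succ r =>
      rw [PowerSeries.coeff_C_mul, PowerSeries.coeff_succ_X_mul]
      simp [geo, pow_succ, mul_comm]

lemma geo_neg_mul (y : R) : geo (-y) * (1 + PowerSeries.C (R := R) y * PowerSeries.X) = 1 := by
  have h := one_sub_mul_geo (-y)
  rw [map_neg, neg_mul, sub_neg_eq_add] at h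
  rw [mul_comm]; exact h

lemma derivativeFun_geo (y : R) :
    (geo y).derivativeFun = PowerSeries.C (R := R) y * (geo y * geo y) := by
  ext r
  rw [coeff_derivativeFun', PowerSeries.coeff_C_mul, PowerSeries.coeff_mul]
  have : ∀ p ∈ antidiagonal r,
      (PowerSeries.coeff (R := R) p.1) (geo y) * (PowerSeries.coeff (R := R) p.2) (geo y) = y ^ r := by
    rintro ⟨a, b⟩ hab
    rw [Finset.HasAntidiagonal.mem_antidiagonal] at hab
    simp only [geo, PowerSeries.coeff_mk, ← pow_add, hab]
  rw [Finset.sum_congr rfl this, Finset.sum_const, Nat.card_antidiagonal, nsmul_eq_mul, geo,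
    PowerSeries.coeff_mk, pow_succ]
  push_cast
  ring

lemma derivativeFun_one_add (y : R) :
    (1 + PowerSeries.C (R := R) y * PowerSeries.X).derivativeFun = PowerSeries.C (R := R) y := by
  ext r
  rw [coeff_derivativeFun', map_add, PowerSeries.coeff_one,
    PowerSeries.coeff_C_mul, PowerSeries.coeff_X, PowerSeries.coeff_C]
  cases r with
  | zero => simp
  | succ r => simp

variable (k : Type) [CommRing k] (n : ℕ)

local notation "A" => MvPolynomial (Fin n) k

def Hs : PowerSeries A := ∏ i : Fin n, geo (X i)

def Es : PowerSeries A := ∏ i : Fin n, (1 + PowerSeries.C (R := A) (X i) * PowerSeries.X)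

def Qs : PowerSeries A := Es k n * Hs k n

lemma derivativeFun_prod_geo (s : Finset (Fin n)) :
    (∏ i ∈ s, geo (X i : A)).derivativeFun =
      (∑ i ∈ s, PowerSeries.C (R := A) (X i) * geo (X i)) * ∏ i ∈ s, geo (X i) := by
  induction s using Finset.induction with
  | empty => simp [PowerSeries.derivativeFun_one]
  | @insert a s ha ih =>
      rw [prod_insert ha, sum_insert ha, PowerSeries.derivativeFun_mul, ih, derivativeFun_geo,
        smul_eq_mul, smul_eq_mul]
      ring

lemma derivativeFun_prod_one_add (s : Finset (Fin n)) :
    (∏ i ∈ s, (1 + PowerSeries.C (R := A) (X i) * PowerSeries.X)).derivativeFun =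
      (∑ i ∈ s, PowerSeries.C (R := A) (X i) * geo (-X i)) *
        ∏ i ∈ s, (1 + PowerSeries.C (R := A) (X i) * PowerSeries.X) := by
  induction s using Finset.induction with
  | empty => simp [PowerSeries.derivativeFun_one]
  | @insert a s ha ih =>
      rw [prod_insert ha, sum_insert ha, PowerSeries.derivativeFun_mul, ih,
        derivativeFun_one_add, smul_eq_mul, smul_eq_mul]
      have h1 : geo (-X a) * (1 + PowerSeries.C (R := A) (X a) * PowerSeries.X) = 1 :=
        geo_neg_mul (X a)
      linear_combination (-(PowerSeries.C (R := A) (X a) *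
        ∏ i ∈ s, (1 + PowerSeries.C (R := A) (X i) * PowerSeries.X))) * h1

lemma derivativeFun_Qs :
    (Qs k n).derivativeFun =
      (∑ i : Fin n, (PowerSeries.C (R := A) (X i) * geo (-X i) + PowerSeries.C (R := A) (X i) * geo (X i))) *
        Qs k n := by
  rw [Qs, PowerSeries.derivativeFun_mul, Es, Hs, derivativeFun_prod_geo,
    derivativeFun_prod_one_add, smul_eq_mul, smul_eq_mul, sum_add_distrib]
  ring

lemma coeff_Hs (r : ℕ) : PowerSeries.coeff (R := A) r (Hs k n) = hsymm (Fin n) k r := by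
  rw [Hs, PowerSeries.coeff_prod, hsymm]
  symm
  refine Finset.sum_bij' (fun (s : Sym (Fin n) r) _ => Multiset.toFinsupp (s : Multiset (Fin n)))
    (fun l hl => ⟨Finsupp.toMultiset l, ?_⟩) ?_ ?_ ?_ ?_ ?_
  · rw [mem_finsuppAntidiag] at hl
    rw [Finsupp.card_toMultiset, Finsupp.sum_fintype _ _ (fun i => rfl), ← hl.1]
    rfl
  · intro s _
    rw [mem_finsuppAntidiag]
    refine ⟨?_, subset_univ _⟩
    have : ∑ i : Fin n, Multiset.toFinsupp (s : Multiset (Fin n)) i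
        = Multiset.card (s : Multiset (Fin n)) := by
      simp only [Multiset.toFinsupp_apply]
      rw [← Finset.sum_subset (subset_univ (s : Multiset (Fin n)).toFinset)
        (fun i _ hi => Multiset.count_eq_zero_of_notMem (by simpa using hi)),
        Multiset.toFinset_sum_count_eq]
    rw [this, Sym.card_coe]
  · intro l _
    exact mem_univ _
  · intro s _
    exact Sym.coe_injective (Multiset.toFinsupp_toMultiset _)
  · intro l _
    show Multiset.toFinsupp (Finsupp.toMultiset l) = l
    exact Finsupp.toMultiset_toFinsupp _
  · intro s _
    rw [Finset.prod_multiset_map_count]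
    refine (Finset.prod_subset (subset_univ (s : Multiset (Fin n)).toFinset)
      (fun i _ hi => by
        rw [Multiset.count_eq_zero_of_notMem (by simpa using hi), pow_zero])).trans ?_
    refine Finset.prod_congr rfl fun i _ => ?_
    rw [geo, PowerSeries.coeff_mk, Multiset.toFinsupp_apply]
    congr 1

lemma coeff_Es_aux (s : Finset (Fin n)) (r : ℕ) :
    PowerSeries.coeff (R := A) r (∏ i ∈ s, (1 + PowerSeries.C (R := A) (X i) * PowerSeries.X)) =
      ∑ t ∈ powersetCard r s, ∏ i ∈ t, (X i : A) := by
  induction s using Finset.induction generalizing r with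
  | empty =>
      cases r with
      | zero => simp
      | succ r =>
          rw [Finset.prod_empty, PowerSeries.coeff_one, if_neg (Nat.succ_ne_zero r),
            Finset.powersetCard_eq_empty.2 (by simp), Finset.sum_empty]
  | @insert a s ha ih =>
      have expand : (∏ i ∈ insert a s, (1 + PowerSeries.C (R := A) (X i) * PowerSeries.X))
          = (∏ i ∈ s, (1 + PowerSeries.C (R := A) (X i) * PowerSeries.X))
            + PowerSeries.C (R := A) (X a) * (PowerSeries.X *
              ∏ i ∈ s, (1 + PowerSeries.C (R := A) (X i) * PowerSeries.X)) := by
        rw [prod_insert ha]; ring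
      rw [expand, map_add, PowerSeries.coeff_C_mul]
      cases r with
      | zero =>
          rw [powersetCard_zero]
          simp [ih 0]
      | succ r =>
          rw [PowerSeries.coeff_succ_X_mul, ih, ih, powersetCard_succ_insert ha,
            sum_union, sum_image]
          · congr 1
            rw [mul_sum]
            refine Finset.sum_congr rfl fun t ht => ?_
            rw [mem_powersetCard] at ht
            rw [prod_insert (fun hat => ha (ht.1 hat))]
          · intro t ht u hu htu
            rw [mem_coe, mem_powersetCard] at ht hu
            have hat : a ∉ t := fun h => ha (ht.1 h)
            have hau : a ∉ u := fun h => ha (hu.1 h)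
            rw [← Finset.erase_insert hat, htu, Finset.erase_insert hau]
          · rw [Finset.disjoint_left]
            intro t ht ht'
            rw [mem_powersetCard] at ht
            rw [mem_image] at ht'
            obtain ⟨u, hu, rfl⟩ := ht'
            exact ha (ht.1 (mem_insert_self a u))

lemma coeff_Es (r : ℕ) : PowerSeries.coeff (R := A) r (Es k n) = esymm (Fin n) k r := by
  rw [Es, coeff_Es_aux, esymm]

lemma coeff_Qs (r : ℕ) : PowerSeries.coeff (R := A) r (Qs k n) = qsym k n r := by
  rw [Qs, PowerSeries.coeff_mul, qsym, Finset.Nat.sum_antidiagonal_eq_sum_range_succ_mk]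
  exact Finset.sum_congr rfl fun p _ => by rw [coeff_Es, coeff_Hs]

lemma key (r : ℕ) (hr : 1 ≤ r) :
    (r : A) * qsym k n r =
      ∑ p ∈ antidiagonal (r - 1),
        ((-1 : A) ^ p.1 + 1) * psum (Fin n) k (p.1 + 1) * qsym k n p.2 := by
  have h := congrArg (PowerSeries.coeff (R := A) (r - 1)) (derivativeFun_Qs k n)
  rw [coeff_derivativeFun', Nat.sub_add_cancel hr, coeff_Qs,
    PowerSeries.coeff_mul] at h
  have hcast : ((r - 1 : ℕ) : A) + 1 = (r : A) := by
    rw [← Nat.cast_add_one, Nat.sub_add_cancel hr]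
  rw [hcast, mul_comm] at h
  rw [h]
  refine Finset.sum_congr rfl fun p _ => ?_
  rw [coeff_Qs]
  congr 1
  rw [map_sum]
  have hterm : ∀ i : Fin n,
      (PowerSeries.coeff (R := A) p.1)
        (PowerSeries.C (R := A) (X i) * geo (-X i) + PowerSeries.C (R := A) (X i) * geo (X i))
        = ((-1 : A) ^ p.1 + 1) * X i ^ (p.1 + 1) := by
    intro i
    rw [map_add, PowerSeries.coeff_C_mul, PowerSeries.coeff_C_mul, geo, geo,
      PowerSeries.coeff_mk, PowerSeries.coeff_mk, neg_pow]
    ring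
  rw [Finset.sum_congr rfl fun i _ => hterm i, ← Finset.mul_sum, psum]

end Stmt19Aux

end
noncomputable section
namespace Stmt19Aux

open Finset MvPolynomial

lemma qsym_zero (k : Type) [CommRing k] (n : ℕ) : qsym k n 0 = 1 := by
  simp [qsym]

lemma main_aux (k : Type) [CommRing k] [Invertible (2 : k)] (n : ℕ) :
    ∀ r : ℕ, Odd r →
      MvPolynomial.psum (Fin n) k r ∈
        Algebra.adjoin k {x : MvPolynomial (Fin n) k | ∃ s : ℕ, 1 ≤ s ∧ x = qsym k n s} := by
  intro r
  induction r using Nat.strong_induction_on with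
  | _ r IH =>
  intro hr
  set S := Algebra.adjoin k {x : MvPolynomial (Fin n) k | ∃ s : ℕ, 1 ≤ s ∧ x = qsym k n s}
    with hS
  have hr1 : 1 ≤ r := hr.pos
  have hq : ∀ s : ℕ, 1 ≤ s → qsym k n s ∈ S := fun s hs => Algebra.subset_adjoin ⟨s, hs, rfl⟩
  have hkey := Stmt19Aux.key k n r hr1
  have hmem : ((r - 1, 0) : ℕ × ℕ) ∈ Finset.HasAntidiagonal.antidiagonal (r - 1) := by simp
  rw [← Finset.add_sum_erase _ _ hmem] at hkey
  have heven : Even (r - 1) := by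
    obtain ⟨m, rfl⟩ := hr
    simp [even_two_mul m]
  have hterm : ((-1 : MvPolynomial (Fin n) k) ^ ((r - 1, 0).1 : ℕ) + 1) *
      MvPolynomial.psum (Fin n) k ((r - 1, 0).1 + 1) * qsym k n (r - 1, 0).2
      = 2 * MvPolynomial.psum (Fin n) k r := by
    rw [heven.neg_one_pow, Nat.sub_add_cancel hr1, qsym_zero]
    ring
  rw [hterm] at hkey
  have h2 : 2 * MvPolynomial.psum (Fin n) k r ∈ S := by
    have : 2 * MvPolynomial.psum (Fin n) k r =
        (r : MvPolynomial (Fin n) k) * qsym k n r -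
          ∑ p ∈ (Finset.HasAntidiagonal.antidiagonal (r - 1)).erase (r - 1, 0),
            ((-1 : MvPolynomial (Fin n) k) ^ p.1 + 1) *
              MvPolynomial.psum (Fin n) k (p.1 + 1) * qsym k n p.2 := by
      rw [hkey]; ring
    rw [this]
    refine sub_mem (mul_mem (Subalgebra.natCast_mem S r) (hq r hr1)) (sum_mem ?_)
    intro p hp
    rw [Finset.mem_erase, Finset.HasAntidiagonal.mem_antidiagonal] at hp
    have hp2 : 1 ≤ p.2 := by
      rcases Nat.eq_zero_or_pos p.2 with h0 | h0
      · exfalso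
        apply hp.1
        have : p.1 = r - 1 := by omega
        rw [Prod.ext_iff]
        exact ⟨this, h0⟩
      · exact h0
    rcases Nat.even_or_odd p.1 with he | ho
    · have hlt : p.1 + 1 < r := by omega
      rw [he.neg_one_pow]
      exact mul_mem (mul_mem (add_mem (one_mem S) (one_mem S))
        (IH (p.1 + 1) hlt (he.add_one))) (hq p.2 hp2)
    · rw [ho.neg_one_pow]
      simp only [neg_add_cancel, zero_mul]
      exact zero_mem S
  have h2' : (2 : k) • MvPolynomial.psum (Fin n) k r ∈ S := by
    rwa [Algebra.smul_def, map_ofNat]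
  have : MvPolynomial.psum (Fin n) k r =
      (⅟(2 : k)) • ((2 : k) • MvPolynomial.psum (Fin n) k r) := by
    rw [smul_smul, invOf_mul_self, one_smul]
  rw [this]
  exact Subalgebra.smul_mem S h2' _

end Stmt19Aux


/-- for every odd `r ≥ 1`, the power sum `p_{r,n} = x₁^r + ⋯ + xₙ^r` belongs
to the `k`-subalgebra of `k[x₁,…,xₙ]` generated by the `q_{s,n}` for `s ≥ 1`. -/
theorem stmt19 (k : Type) [CommRing k] [Invertible (2 : k)] (n r : ℕ)
    (hr : Odd r) (hr1 : 1 ≤ r) :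
    MvPolynomial.psum (Fin n) k r ∈
      Algebra.adjoin k {x : MvPolynomial (Fin n) k | ∃ s : ℕ, 1 ≤ s ∧ x = qsym k n s} := by
  exact Stmt19Aux.main_aux k n r hr

end
end
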